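/- arXiv:2208.09724 — 2 statements merged into one kernel-verified Lean document; each statement's English description precedes it below -/
import Mathlib

section
/- In a conic idempotent residuated lattice, if two elements x and y do not commute (x·y ≠ y·x), then x^* = y and y^* = x (where z^* := z^ℓ ∨ z^r), and the set {x, y} forms either a left-zero semigroup (x·y = x and y·x = y) or a right-zero semigroup (x·y = y and y·x = x). -/
/-!
Residuation makes multiplication monotone, so in an idempotent monoid two elements on the same
side of `1` multiply to their meet or their join and hence commute, while a product of
`a ≤ 1 ≤ b` is `a` or `b` according to the side of `1` it lies on. Thus non-commuting
`x ≤ 1 ≤ y` form a left-zero or a right-zero semigroup; either way `y x y = y`, and one of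
`x y`, `y x` equals `x ≤ 1`, which puts `y` below `x^*` and `x` below `y^*`. Conversely, each of
the residuals `u` of `1` at `x` or `y` is absorbed on one side (`x^ℓ x = x`, `x x^r = x`,
`y^ℓ y = y^ℓ`, `y y^r = y^r`); inserting `y = y x y` next to the absorbing factor and commuting
`u` with the element on its own side of `1` gives `u ≤ y`, resp. `u ≤ x`.
-/

section Residuated

variable {A : Type*} [Monoid A] [Preorder A] {ld rd : A → A → A}

theorem mulLeftMono_of_residuated (resl : ∀ x y z : A, x * y ≤ z ↔ y ≤ ld x z) :
    MulLeftMono A :=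
  ⟨fun a _ c hbc => (resl a _ _).2 (hbc.trans ((resl a c _).1 le_rfl))⟩

theorem mulRightMono_of_residuated (resr : ∀ x y z : A, x * y ≤ z ↔ x ≤ rd z y) :
    MulRightMono A :=
  ⟨fun a _ c hbc => (resr _ a _).2 (hbc.trans ((resr c a _).1 le_rfl))⟩

end Residuated

section IdempotentMonotone

variable {A : Type*} [Monoid A] {a b u v x y : A}

section PartialOrder

variable [PartialOrder A]

theorem mul_eq_left_of_mul_le_one [MulLeftMono A] (idem : ∀ a : A, a * a = a)
    (hb : 1 ≤ b) (h : a * b ≤ 1) : a * b = a :=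
  le_antisymm
    (calc a * b = a * (a * b) := by rw [← mul_assoc, idem]
      _ ≤ a := mul_le_of_le_one_right' h)
    (le_mul_of_one_le_right' hb)

theorem mul_eq_right_of_mul_le_one [MulRightMono A] (idem : ∀ a : A, a * a = a)
    (ha : 1 ≤ a) (h : a * b ≤ 1) : a * b = b :=
  le_antisymm
    (calc a * b = a * b * b := by rw [mul_assoc, idem]
      _ ≤ b := mul_le_of_le_one_left' h)
    (le_mul_of_one_le_left' ha)

theorem mul_eq_left_of_one_le_mul [MulLeftMono A] (idem : ∀ a : A, a * a = a)
    (hb : b ≤ 1) (h : 1 ≤ a * b) : a * b = a :=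
  le_antisymm (mul_le_of_le_one_right' hb)
    (calc a ≤ a * (a * b) := le_mul_of_one_le_right' h
      _ = a * b := by rw [← mul_assoc, idem])

theorem mul_eq_right_of_one_le_mul [MulRightMono A] (idem : ∀ a : A, a * a = a)
    (ha : a ≤ 1) (h : 1 ≤ a * b) : a * b = b :=
  le_antisymm (mul_le_of_le_one_left' ha)
    (calc b ≤ a * b * b := le_mul_of_one_le_left' h
      _ = a * b := by rw [mul_assoc, idem])

theorem mul_eq_left_or_eq_right_of_le_one_of_one_le [MulLeftMono A] [MulRightMono A]
    (conic : ∀ a : A, a ≤ 1 ∨ 1 ≤ a) (idem : ∀ a : A, a * a = a)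
    (ha : a ≤ 1) (hb : 1 ≤ b) : a * b = a ∨ a * b = b :=
  (conic (a * b)).imp (mul_eq_left_of_mul_le_one idem hb) (mul_eq_right_of_one_le_mul idem ha)

theorem mul_eq_left_or_eq_right_of_one_le_of_le_one [MulLeftMono A] [MulRightMono A]
    (conic : ∀ a : A, a ≤ 1 ∨ 1 ≤ a) (idem : ∀ a : A, a * a = a)
    (ha : 1 ≤ a) (hb : b ≤ 1) : a * b = a ∨ a * b = b :=
  (conic (a * b)).symm.imp (mul_eq_left_of_one_le_mul idem hb)
    (mul_eq_right_of_mul_le_one idem ha)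

theorem left_zero_or_right_zero_of_mul_ne_mul [MulLeftMono A] [MulRightMono A]
    (conic : ∀ a : A, a ≤ 1 ∨ 1 ≤ a) (idem : ∀ a : A, a * a = a)
    (hx : x ≤ 1) (hy : 1 ≤ y) (hne : x * y ≠ y * x) :
    (x * y = x ∧ y * x = y) ∨ (x * y = y ∧ y * x = x) := by
  rcases mul_eq_left_or_eq_right_of_le_one_of_one_le conic idem hx hy with hxy | hxy <;>
    rcases mul_eq_left_or_eq_right_of_one_le_of_le_one conic idem hy hx with hyx | hyx
  · exact Or.inl ⟨hxy, hyx⟩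
  · exact absurd (hxy.trans hyx.symm) hne
  · exact absurd (hxy.trans hyx.symm) hne
  · exact Or.inr ⟨hxy, hyx⟩

end PartialOrder

theorem mul_eq_inf_of_le_one [SemilatticeInf A] [MulLeftMono A] [MulRightMono A]
    (idem : ∀ a : A, a * a = a) (ha : a ≤ 1) (hb : b ≤ 1) : a * b = a ⊓ b :=
  le_antisymm (le_inf (mul_le_of_le_one_right' hb) (mul_le_of_le_one_left' ha))
    (calc a ⊓ b = (a ⊓ b) * (a ⊓ b) := (idem _).symm
      _ ≤ a * b := mul_le_mul' inf_le_left inf_le_right)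

theorem mul_eq_sup_of_one_le [SemilatticeSup A] [MulLeftMono A] [MulRightMono A]
    (idem : ∀ a : A, a * a = a) (ha : 1 ≤ a) (hb : 1 ≤ b) : a * b = a ⊔ b :=
  le_antisymm
    (calc a * b ≤ (a ⊔ b) * (a ⊔ b) := mul_le_mul' le_sup_left le_sup_right
      _ = a ⊔ b := idem _)
    (sup_le (le_mul_of_one_le_right' hb) (le_mul_of_one_le_left' ha))

theorem commute_of_le_one [SemilatticeInf A] [MulLeftMono A] [MulRightMono A]
    (idem : ∀ a : A, a * a = a) (ha : a ≤ 1) (hb : b ≤ 1) : Commute a b := by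
  rw [Commute, SemiconjBy, mul_eq_inf_of_le_one idem ha hb, mul_eq_inf_of_le_one idem hb ha,
    inf_comm]

theorem commute_of_one_le [SemilatticeSup A] [MulLeftMono A] [MulRightMono A]
    (idem : ∀ a : A, a * a = a) (ha : 1 ≤ a) (hb : 1 ≤ b) : Commute a b := by
  rw [Commute, SemiconjBy, mul_eq_sup_of_one_le idem ha hb, mul_eq_sup_of_one_le idem hb ha,
    sup_comm]

theorem le_of_one_le_of_mul_eq_right [SemilatticeSup A] [MulLeftMono A] [MulRightMono A]
    (idem : ∀ a : A, a * a = a) (hu : 1 ≤ u) (hy : 1 ≤ y) (hyxy : y * x * y = y)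
    (hux : u * x = x) : u ≤ y :=
  calc u ≤ u * y := le_mul_of_one_le_right' hy
    _ = u * (y * x * y) := by rw [hyxy]
    _ = y * (u * x) * y := by
      rw [← mul_assoc u, ← mul_assoc u, (commute_of_one_le idem hu hy).eq, mul_assoc y u x]
    _ = y := by rw [hux, hyxy]

theorem le_of_one_le_of_mul_eq_left [SemilatticeSup A] [MulLeftMono A] [MulRightMono A]
    (idem : ∀ a : A, a * a = a) (hu : 1 ≤ u) (hy : 1 ≤ y) (hyxy : y * x * y = y)
    (hxu : x * u = x) : u ≤ y :=
  calc u ≤ y * u := le_mul_of_one_le_left' hy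
    _ = y * x * (y * u) := by rw [← mul_assoc, hyxy]
    _ = y * (x * u) * y := by
      rw [(commute_of_one_le idem hy hu).eq, ← mul_assoc, mul_assoc y x u]
    _ = y := by rw [hxu, hyxy]

theorem le_of_le_one_of_mul_eq_left [SemilatticeInf A] [MulLeftMono A] [MulRightMono A]
    (idem : ∀ a : A, a * a = a) (hv : v ≤ 1) (hx : x ≤ 1) (hyxy : y * x * y = y)
    (hvy : v * y = v) : v ≤ x :=
  calc v = v * (y * x * y) := by rw [hyxy, hvy]
    _ = x * v := by
      rw [← mul_assoc, ← mul_assoc, hvy, (commute_of_le_one idem hv hx).eq, mul_assoc, hvy]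
    _ ≤ x := mul_le_of_le_one_right' hv

theorem le_of_le_one_of_mul_eq_right [SemilatticeInf A] [MulLeftMono A] [MulRightMono A]
    (idem : ∀ a : A, a * a = a) (hv : v ≤ 1) (hx : x ≤ 1) (hyxy : y * x * y = y)
    (hyv : y * v = v) : v ≤ x :=
  calc v = y * x * y * v := by rw [hyxy, hyv]
    _ = y * (v * x) := by
      rw [mul_assoc, hyv, mul_assoc, ← (commute_of_le_one idem hv hx).eq]
    _ = v * x := by rw [← mul_assoc, hyv]
    _ ≤ x := mul_le_of_le_one_left' hv

end IdempotentMonotone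

section ResiduatedIdempotent

variable {A : Type*} [Monoid A] [Lattice A] {ld rd : A → A → A} {x y : A}

theorem rd_one_sup_ld_one_eq_of_le_one (resl : ∀ x y z : A, x * y ≤ z ↔ y ≤ ld x z)
    (resr : ∀ x y z : A, x * y ≤ z ↔ x ≤ rd z y) (idem : ∀ a : A, a * a = a)
    (hx : x ≤ 1) (hy : 1 ≤ y) (hyxy : y * x * y = y) (hxy : x * y ≤ 1 ∨ y * x ≤ 1) :
    rd 1 x ⊔ ld x 1 = y := by
  have := mulLeftMono_of_residuated resl
  have := mulRightMono_of_residuated resr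
  have hl : 1 ≤ rd 1 x := (resr 1 x 1).1 (by rwa [one_mul])
  have hr : 1 ≤ ld x 1 := (resl x 1 1).1 (by rwa [mul_one])
  refine le_antisymm (sup_le ?_ ?_) ?_
  · exact le_of_one_le_of_mul_eq_right idem hl hy hyxy
      (mul_eq_right_of_mul_le_one idem hl ((resr _ x 1).2 le_rfl))
  · exact le_of_one_le_of_mul_eq_left idem hr hy hyxy
      (mul_eq_left_of_mul_le_one idem hr ((resl x _ 1).2 le_rfl))
  · rcases hxy with h | h
    · exact le_sup_of_le_right ((resl x y 1).1 h)
    · exact le_sup_of_le_left ((resr y x 1).1 h)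

theorem rd_one_sup_ld_one_eq_of_one_le (resl : ∀ x y z : A, x * y ≤ z ↔ y ≤ ld x z)
    (resr : ∀ x y z : A, x * y ≤ z ↔ x ≤ rd z y) (idem : ∀ a : A, a * a = a)
    (hx : x ≤ 1) (hy : 1 ≤ y) (hyxy : y * x * y = y) (hxy : x * y ≤ 1 ∨ y * x ≤ 1) :
    rd 1 y ⊔ ld y 1 = x := by
  have := mulLeftMono_of_residuated resl
  have := mulRightMono_of_residuated resr
  have hl : rd 1 y * y ≤ 1 := (resr _ y 1).2 le_rfl
  have hr : y * ld y 1 ≤ 1 := (resl y _ 1).2 le_rfl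
  have hl' : rd 1 y ≤ 1 := (le_mul_of_one_le_right' hy).trans hl
  have hr' : ld y 1 ≤ 1 := (le_mul_of_one_le_left' hy).trans hr
  refine le_antisymm (sup_le ?_ ?_) ?_
  · exact le_of_le_one_of_mul_eq_left idem hl' hx hyxy (mul_eq_left_of_mul_le_one idem hy hl)
  · exact le_of_le_one_of_mul_eq_right idem hr' hx hyxy (mul_eq_right_of_mul_le_one idem hy hr)
  · rcases hxy with h | h
    · exact le_sup_of_le_left ((resr x y 1).1 h)
    · exact le_sup_of_le_right ((resl y x 1).1 h)

end ResiduatedIdempotent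

/-- In a conic idempotent residuated lattice, if `x` and `y` do not commute, then
`x^* = y`, `y^* = x` (where `z^* = z^ℓ ∨ z^r`) and `{x,y}` forms a left-zero or a
right-zero semigroup. -/
theorem stmt3 {A : Type*} [Lattice A] [Monoid A]
    (ld rd : A → A → A)
    (resl : ∀ x y z : A, x * y ≤ z ↔ y ≤ ld x z)
    (resr : ∀ x y z : A, x * y ≤ z ↔ x ≤ rd z y)
    (conic : ∀ a : A, a ≤ 1 ∨ 1 ≤ a)
    (idem : ∀ x : A, x * x = x) :
    ∀ x y : A, x * y ≠ y * x →
      (rd 1 x ⊔ ld x 1 = y ∧ rd 1 y ⊔ ld y 1 = x ∧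
        ((x * y = x ∧ y * x = y) ∨ (x * y = y ∧ y * x = x))) := by
  have := mulLeftMono_of_residuated resl
  have := mulRightMono_of_residuated resr
  have key : ∀ x y : A, x ≤ 1 → 1 ≤ y → x * y ≠ y * x →
      (rd 1 x ⊔ ld x 1 = y ∧ rd 1 y ⊔ ld y 1 = x ∧
        ((x * y = x ∧ y * x = y) ∨ (x * y = y ∧ y * x = x))) := by
    intro x y hx hy hne
    have hzero := left_zero_or_right_zero_of_mul_ne_mul conic idem hx hy hne
    have hyxy : y * x * y = y := by
      rcases hzero with ⟨-, h⟩ | ⟨h, -⟩ <;> simp only [h, mul_assoc, idem]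
    have hxy : x * y ≤ 1 ∨ y * x ≤ 1 := by
      rcases hzero with ⟨h, -⟩ | ⟨-, h⟩
      exacts [Or.inl (h.trans_le hx), Or.inr (h.trans_le hx)]
    exact ⟨rd_one_sup_ld_one_eq_of_le_one resl resr idem hx hy hyxy hxy,
      rd_one_sup_ld_one_eq_of_one_le resl resr idem hx hy hyxy hxy, hzero⟩
  intro x y hne
  rcases conic x with hx | hx <;> rcases conic y with hy | hy
  · exact absurd (commute_of_le_one idem hx hy).eq hne
  · exact key x y hx hy hne
  · obtain ⟨hy', hx', hzero⟩ := key y x hy hx hne.symm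
    exact ⟨hx', hy', hzero.imp (fun h => h.symm) (fun h => h.symm)⟩
  · exact absurd (commute_of_one_le idem hx hy).eq hne
end

section
/- In a conic idempotent residuated lattice, defining x^⋆ := x^ℓ ∧ x^r and x^* := x^ℓ ∨ x^r, we have: x ≤ y^⋆ if and only if y ≤ x^⋆; moreover (x^⋆, x^*) forms a splitting pair, i.e., for every element c, either c ≤ x^⋆ or x^* ≤ c. -/
/-!
Residuation turns `c ≤ x^⋆` into `c·x ≤ 1 ∧ x·c ≤ 1`, which is symmetric in `c` and `x`.
For splitting, conicity turns a failure of `c ≤ x^⋆` into `1 ≤ x·c` or `1 ≤ c·x`; by left-right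
symmetry say `1 ≤ x·c`. Then `x^ℓ ≤ x^ℓ·x·c ≤ c` in any ordered monoid, and likewise
`x^r ≤ c·x·x^r ≤ c` unless `c·x ≤ 1`. That last case is where conicity and idempotence enter:
a product of a negative and a positive idempotent-monoid element equals the factor lying on the
same side of `1` as the product, and for `x ≥ 1` this rule rewrites `x^r = x·c·x^r` into a
bound `x^r ≤ c`; for `x ≤ 1`, distributivity of `x·(-)` over joins and `a·b ≤ a ⊔ b` suffice.
-/
section Preorder

variable {M : Type*} [Monoid M] [Preorder M] [MulLeftMono M] [MulRightMono M]

theorem le_of_mul_le_one_of_one_le_mul {x y c : M} (hyx : y * x ≤ 1) (hxc : 1 ≤ x * c) :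
    y ≤ c :=
  calc y ≤ y * (x * c) := le_mul_of_one_le_right' hxc
    _ = y * x * c := (mul_assoc y x c).symm
    _ ≤ c := mul_le_of_le_one_left' hyx

theorem le_of_mul_le_one_of_one_le_mul' {x z c : M} (hxz : x * z ≤ 1) (hcx : 1 ≤ c * x) :
    z ≤ c :=
  calc z ≤ c * x * z := le_mul_of_one_le_left' hcx
    _ = c * (x * z) := mul_assoc c x z
    _ ≤ c := mul_le_of_le_one_right' hxz

end Preorder

section PartialOrder

variable {M : Type*} [Monoid M] [PartialOrder M]

theorem mul_eq_right_of_one_le_of_mul_le_one [MulRightMono M] (idem : ∀ x : M, x * x = x)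
    {a b : M} (ha : 1 ≤ a) (h : a * b ≤ 1) : a * b = b :=
  le_antisymm
    (calc a * b = a * b * b := by rw [mul_assoc, idem]
      _ ≤ b := mul_le_of_le_one_left' h)
    (le_mul_of_one_le_left' ha)

theorem mul_eq_left_of_one_le_of_mul_le_one [MulLeftMono M] (idem : ∀ x : M, x * x = x)
    {a b : M} (hb : 1 ≤ b) (h : a * b ≤ 1) : a * b = a :=
  le_antisymm
    (calc a * b = a * (a * b) := by rw [← mul_assoc, idem]
      _ ≤ a := mul_le_of_le_one_right' h)
    (le_mul_of_one_le_right' hb)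

theorem mul_eq_left_of_le_one_of_one_le_mul [MulLeftMono M] (idem : ∀ x : M, x * x = x)
    {a b : M} (hb : b ≤ 1) (h : 1 ≤ a * b) : a * b = a :=
  le_antisymm (mul_le_of_le_one_right' hb)
    (calc a ≤ a * (a * b) := le_mul_of_one_le_right' h
      _ = a * b := by rw [← mul_assoc, idem])

theorem mul_eq_right_of_le_one_of_one_le_mul [MulRightMono M] (idem : ∀ x : M, x * x = x)
    {a b : M} (ha : a ≤ 1) (h : 1 ≤ a * b) : a * b = b :=
  le_antisymm (mul_le_of_le_one_left' ha)
    (calc b ≤ a * b * b := le_mul_of_one_le_left' h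
      _ = a * b := by rw [mul_assoc, idem])

end PartialOrder

section Lattice

variable {M : Type*} [Monoid M] [Lattice M] [MulLeftMono M] [MulRightMono M]

theorem mul_le_sup (idem : ∀ x : M, x * x = x) (a b : M) : a * b ≤ a ⊔ b :=
  (mul_le_mul' le_sup_left le_sup_right).trans_eq (idem _)

theorem le_of_mul_le_one_of_one_le_mul_of_mul_le_one (conic : ∀ a : M, a ≤ 1 ∨ 1 ≤ a)
    (idem : ∀ x : M, x * x = x) {x y z : M} (mul_sup : ∀ a b, x * (a ⊔ b) = x * a ⊔ x * b)
    (hxz : x * z ≤ 1) (hxy : 1 ≤ x * y) (hyx : y * x ≤ 1) : z ≤ y := by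
  rcases conic x with hx | hx
  · have hy : 1 ≤ y := hxy.trans (mul_le_of_le_one_left' hx)
    calc z ≤ x * y * z := le_mul_of_one_le_left' hxy
      _ = x * (y * z) := mul_assoc x y z
      _ ≤ x * (y ⊔ z) := mul_le_mul_right (mul_le_sup idem y z) x
      _ = x * y ⊔ x * z := mul_sup y z
      _ ≤ y := sup_le (mul_le_of_le_one_left' hx) (hxz.trans hy)
  · have hy : y ≤ 1 := (le_mul_of_one_le_right' hx).trans hyx
    have hz : z ≤ 1 := (le_mul_of_one_le_left' hx).trans hxz
    have hz_eq : z = x * (y * z) := by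
      rw [← mul_assoc, mul_eq_left_of_le_one_of_one_le_mul idem hy hxy,
        mul_eq_right_of_one_le_of_mul_le_one idem hx hxz]
    rcases conic (x * (y * z)) with h | h
    · rw [mul_eq_right_of_one_le_of_mul_le_one idem hx h] at hz_eq
      exact hz_eq.trans_le (mul_le_of_le_one_right' hz)
    · rw [mul_eq_left_of_le_one_of_one_le_mul idem (mul_le_one' hy hz) h] at hz_eq
      have hx_one : x = 1 := le_antisymm (hz_eq.symm.trans_le hz) hx
      rw [hx_one, one_mul] at hxy
      exact hz.trans hxy

theorem le_of_mul_le_one_of_one_le_mul_of_mul_le_one' (conic : ∀ a : M, a ≤ 1 ∨ 1 ≤ a)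
    (idem : ∀ x : M, x * x = x) {x y z : M} (sup_mul : ∀ a b, (a ⊔ b) * x = a * x ⊔ b * x)
    (hzx : z * x ≤ 1) (hyx : 1 ≤ y * x) (hxy : x * y ≤ 1) : z ≤ y := by
  rcases conic x with hx | hx
  · have hy : 1 ≤ y := hyx.trans (mul_le_of_le_one_right' hx)
    calc z ≤ z * (y * x) := le_mul_of_one_le_right' hyx
      _ = z * y * x := (mul_assoc z y x).symm
      _ ≤ (z ⊔ y) * x := mul_le_mul_left (mul_le_sup idem z y) x
      _ = z * x ⊔ y * x := sup_mul z y
      _ ≤ y := sup_le (hzx.trans hy) (mul_le_of_le_one_right' hx)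
  · have hy : y ≤ 1 := (le_mul_of_one_le_left' hx).trans hxy
    have hz : z ≤ 1 := (le_mul_of_one_le_right' hx).trans hzx
    have hz_eq : z = z * y * x := by
      rw [mul_assoc, mul_eq_right_of_le_one_of_one_le_mul idem hy hyx,
        mul_eq_left_of_one_le_of_mul_le_one idem hx hzx]
    rcases conic (z * y * x) with h | h
    · rw [mul_eq_left_of_one_le_of_mul_le_one idem hx h] at hz_eq
      exact hz_eq.trans_le (mul_le_of_le_one_left' hz)
    · rw [mul_eq_right_of_le_one_of_one_le_mul idem (mul_le_one' hz hy) h] at hz_eq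
      have hx_one : x = 1 := le_antisymm (hz_eq.symm.trans_le hz) hx
      rw [hx_one, mul_one] at hyx
      exact hz.trans hyx

theorem le_of_mul_le_one_of_one_le_mul_left (conic : ∀ a : M, a ≤ 1 ∨ 1 ≤ a)
    (idem : ∀ x : M, x * x = x) {x z c : M} (mul_sup : ∀ a b, x * (a ⊔ b) = x * a ⊔ x * b)
    (hxz : x * z ≤ 1) (hxc : 1 ≤ x * c) : z ≤ c :=
  (conic (c * x)).elim
    (le_of_mul_le_one_of_one_le_mul_of_mul_le_one conic idem mul_sup hxz hxc)
    (le_of_mul_le_one_of_one_le_mul' hxz)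

theorem le_of_mul_le_one_of_one_le_mul_right (conic : ∀ a : M, a ≤ 1 ∨ 1 ≤ a)
    (idem : ∀ x : M, x * x = x) {x z c : M} (sup_mul : ∀ a b, (a ⊔ b) * x = a * x ⊔ b * x)
    (hzx : z * x ≤ 1) (hcx : 1 ≤ c * x) : z ≤ c :=
  (conic (x * c)).elim
    (le_of_mul_le_one_of_one_le_mul_of_mul_le_one' conic idem sup_mul hzx hcx)
    (le_of_mul_le_one_of_one_le_mul hzx)

end Lattice

/-- In a conic idempotent residuated lattice, with `x^⋆ = x^ℓ ∧ x^r` and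
`x^* = x^ℓ ∨ x^r`: `x ≤ y^⋆ ↔ y ≤ x^⋆`, and `(x^⋆, x^*)` is a splitting pair. -/
theorem stmt5 {A : Type*} [Lattice A] [Monoid A]
    (ld rd : A → A → A)
    (resl : ∀ x y z : A, x * y ≤ z ↔ y ≤ ld x z)
    (resr : ∀ x y z : A, x * y ≤ z ↔ x ≤ rd z y)
    (conic : ∀ a : A, a ≤ 1 ∨ 1 ≤ a)
    (idem : ∀ x : A, x * x = x) :
    (∀ x y : A, x ≤ rd 1 y ⊓ ld y 1 ↔ y ≤ rd 1 x ⊓ ld x 1) ∧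
    (∀ x c : A, c ≤ rd 1 x ⊓ ld x 1 ∨ rd 1 x ⊔ ld x 1 ≤ c) := by
  have gcl : ∀ x : A, GaloisConnection (x * ·) (ld x) := fun x a b => resl x a b
  have gcr : ∀ x : A, GaloisConnection (· * x) (rd · x) := fun x a b => resr a x b
  have : MulLeftMono A := ⟨fun x _ _ h => (gcl x).monotone_l h⟩
  have : MulRightMono A := ⟨fun x _ _ h => (gcr x).monotone_l h⟩
  have le_star : ∀ x y : A, x ≤ rd 1 y ⊓ ld y 1 ↔ x * y ≤ 1 ∧ y * x ≤ 1 := fun x y => by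
    rw [le_inf_iff, resr, resl]
  refine ⟨fun x y => by rw [le_star, le_star, and_comm],
    fun x c => or_iff_not_imp_left.2 fun hc => ?_⟩
  rw [le_star, not_and_or] at hc
  have hLx : rd 1 x * x ≤ 1 := (resr _ x 1).2 le_rfl
  have hxR : x * ld x 1 ≤ 1 := (resl x _ 1).2 le_rfl
  rcases hc.symm.imp (conic _).resolve_left (conic _).resolve_left with hxc | hcx
  · exact sup_le (le_of_mul_le_one_of_one_le_mul hLx hxc)
      (le_of_mul_le_one_of_one_le_mul_left conic idem (fun _ _ => (gcl x).l_sup) hxR hxc)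
  · exact sup_le
      (le_of_mul_le_one_of_one_le_mul_right conic idem (fun _ _ => (gcr x).l_sup) hLx hcx)
      (le_of_mul_le_one_of_one_le_mul' hxR hcx)
end
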